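/- arXiv:2605.01103 — 3 statements merged into one kernel-verified Lean document; each statement's English description precedes it below -/
import Mathlib

section
/- Let ħ > 0 and let A, B be real symmetric positive definite n×n matrices. Set X_A = {x ∈ ℝⁿ : Ax·x ≤ ħ} and P_B = {p ∈ ℝⁿ : Bp·p ≤ ħ}. Then the following are equivalent: (1) X_A^ħ ⊆ P_B; (2) A⁻¹ − B is positive semidefinite (B ≤ A⁻¹ in the Löwner order); (3) every eigenvalue of the matrix AB is at most 1. -/
/-! The support function of the ellipsoid `{x | Ax·x ≤ ℏ}` is `p ↦ √(ℏ · A⁻¹p·p)`, so its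
`ℏ`-polar dual is the ellipsoid of `A⁻¹`; and one ellipsoid lies inside another exactly when
their quadratic forms compare in the Löwner order. For the spectral condition conjugate by
`R = √A`: `R (A⁻¹ - B) R = 1 - RBR`, while `AB = R (RBR) R⁻¹` is similar to the symmetric matrix
`RBR`, whose spectrum lies in `(-∞, 1]` exactly when `RBR ≤ 1`. -/

open Matrix

noncomputable section

/-- The `ℏ`-polar dual of a set `X ⊆ ℝⁿ`. -/
def polarDual (ℏ : ℝ) {n : ℕ} (X : Set (Fin n → ℝ)) : Set (Fin n → ℝ) :=
  {p | ∀ x ∈ X, p ⬝ᵥ x ≤ ℏ}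

section Ellipsoid

variable {ι : Type*} [Fintype ι]

def ellipsoid (ℏ : ℝ) (A : Matrix ι ι ℝ) : Set (ι → ℝ) :=
  {x | A *ᵥ x ⬝ᵥ x ≤ ℏ}

theorem Matrix.IsHermitian.mulVec_dotProduct_comm {A : Matrix ι ι ℝ} (hA : A.IsHermitian)
    (x y : ι → ℝ) : A *ᵥ x ⬝ᵥ y = A *ᵥ y ⬝ᵥ x := by
  rw [dotProduct_comm, dotProduct_mulVec, ← mulVec_transpose,
    ← conjTranspose_eq_transpose_of_trivial, hA.eq]

theorem Matrix.mulVec_smul_dotProduct_smul (A : Matrix ι ι ℝ) (s : ℝ) (x : ι → ℝ) :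
    A *ᵥ (s • x) ⬝ᵥ (s • x) = s ^ 2 * (A *ᵥ x ⬝ᵥ x) := by
  rw [mulVec_smul, smul_dotProduct, dotProduct_smul, smul_eq_mul, smul_eq_mul, sq, mul_assoc]

theorem Matrix.PosSemidef.mulVec_dotProduct_nonneg {A : Matrix ι ι ℝ} (hA : A.PosSemidef)
    (x : ι → ℝ) : 0 ≤ A *ᵥ x ⬝ᵥ x := by
  simpa [dotProduct_comm] using hA.dotProduct_mulVec_nonneg x

theorem Matrix.PosDef.mulVec_dotProduct_pos {A : Matrix ι ι ℝ} (hA : A.PosDef) {x : ι → ℝ}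
    (hx : x ≠ 0) : 0 < A *ᵥ x ⬝ᵥ x := by
  simpa [dotProduct_comm] using hA.dotProduct_mulVec_pos hx

theorem exists_pos_sq_mul_eq {t ℏ : ℝ} (ht : 0 < t) (hℏ : 0 < ℏ) : ∃ s, 0 < s ∧ s ^ 2 * t = ℏ :=
  ⟨√(ℏ / t), by positivity, by rw [Real.sq_sqrt (by positivity), div_mul_cancel₀ _ ht.ne']⟩

theorem ellipsoid_subset_ellipsoid_iff {ℏ : ℝ} (hℏ : 0 < ℏ) {C D : Matrix ι ι ℝ} (hC : C.PosDef)
    (hD : D.IsHermitian) : ellipsoid ℏ C ⊆ ellipsoid ℏ D ↔ (C - D).PosSemidef := by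
  refine ⟨fun hCD ↦ .of_dotProduct_mulVec_nonneg (hC.isHermitian.sub hD) fun p ↦ ?_,
    fun hCD x hx ↦ ?_⟩
  · suffices D *ᵥ p ⬝ᵥ p ≤ C *ᵥ p ⬝ᵥ p by
      simpa [dotProduct_comm, sub_mulVec, dotProduct_sub] using this
    rcases eq_or_ne p 0 with rfl | hp
    · simp
    -- rescale `p` onto the boundary of the `C`-ellipsoid
    obtain ⟨s, hs, hst⟩ := exists_pos_sq_mul_eq (hC.mulVec_dotProduct_pos hp) hℏ
    have hsp : s • p ∈ ellipsoid ℏ D := hCD <| by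
      rw [ellipsoid, Set.mem_ofPred_eq, mulVec_smul_dotProduct_smul, hst]
    rw [ellipsoid, Set.mem_ofPred_eq, mulVec_smul_dotProduct_smul, ← hst] at hsp
    exact le_of_mul_le_mul_left hsp (by positivity)
  · have := hCD.mulVec_dotProduct_nonneg x
    rw [sub_mulVec, sub_dotProduct] at this
    exact (sub_nonneg.mp this).trans hx

end Ellipsoid

theorem polarDual_ellipsoid {n : ℕ} {ℏ : ℝ} (hℏ : 0 < ℏ) {A : Matrix (Fin n) (Fin n) ℝ}
    (hA : A.PosDef) : polarDual ℏ (ellipsoid ℏ A) = ellipsoid ℏ A⁻¹ := by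
  have hAA : ∀ p, A *ᵥ (A⁻¹ *ᵥ p) = p := fun p ↦ by
    rw [mulVec_mulVec, mul_nonsing_inv _ ((isUnit_iff_isUnit_det A).mp hA.isUnit), one_mulVec]
  ext p
  refine ⟨fun hp ↦ ?_, fun hp x hx ↦ ?_⟩
  · rcases eq_or_ne p 0 with rfl | hp0
    · simp [ellipsoid, hℏ.le]
    set t := A⁻¹ *ᵥ p ⬝ᵥ p
    obtain ⟨s, hs, hst⟩ := exists_pos_sq_mul_eq (hA.inv.mulVec_dotProduct_pos hp0) hℏ
    have hx : s • A⁻¹ *ᵥ p ∈ ellipsoid ℏ A := by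
      rw [ellipsoid, Set.mem_ofPred_eq, mulVec_smul_dotProduct_smul, hAA, dotProduct_comm, hst]
    have hpx : s * t ≤ ℏ := by simpa [t, dotProduct_comm] using hp _ hx
    -- `(s t)² = ℏ t`, so `s t ≤ ℏ` forces `t ≤ ℏ`
    show t ≤ ℏ
    nlinarith
  · -- expand `0 ≤ A (x - A⁻¹ p) ⬝ᵥ (x - A⁻¹ p)`
    have hq := hA.posSemidef.mulVec_dotProduct_nonneg (x - A⁻¹ *ᵥ p)
    rw [mulVec_sub, hAA, sub_dotProduct, dotProduct_sub, dotProduct_sub,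
      hA.isHermitian.mulVec_dotProduct_comm x (A⁻¹ *ᵥ p), hAA, dotProduct_comm p (A⁻¹ *ᵥ p)] at hq
    have hp' : A⁻¹ *ᵥ p ⬝ᵥ p ≤ ℏ := hp
    have hx' : A *ᵥ x ⬝ᵥ x ≤ ℏ := hx
    linarith [dotProduct_comm p x]

section Spectrum

open scoped MatrixOrder

variable {ι : Type*} [Fintype ι] [DecidableEq ι]

theorem Matrix.mem_spectrum_iff_exists_mulVec_eq_smul {K : Type*} [Field K] (M : Matrix ι ι K)
    (μ : K) : μ ∈ spectrum K M ↔ ∃ v, v ≠ 0 ∧ M *ᵥ v = μ • v := by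
  rw [← spectrum_toLin', ← Module.End.hasEigenvalue_iff_mem_spectrum]
  constructor
  · intro h
    obtain ⟨v, hv⟩ := h.exists_hasEigenvector
    exact ⟨v, hv.2, by simpa using hv.apply_eq_smul⟩
  · rintro ⟨v, hv0, hv⟩
    exact Module.End.hasEigenvalue_of_hasEigenvector
      ⟨by simpa [Module.End.mem_eigenspace_iff] using hv, hv0⟩

theorem Matrix.IsHermitian.le_one_iff_spectrum_le_one {S : Matrix ι ι ℝ} (hS : S.IsHermitian) :
    S ≤ 1 ↔ ∀ μ ∈ spectrum ℝ S, μ ≤ 1 := by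
  simpa using le_algebraMap_iff_spectrum_le (r := (1 : ℝ)) (a := S) hS.isSelfAdjoint

theorem Matrix.PosDef.posSemidef_inv_sub_iff_spectrum_mul_le_one {A B : Matrix ι ι ℝ}
    (hA : A.PosDef) (hB : B.IsHermitian) :
    (A⁻¹ - B).PosSemidef ↔ ∀ μ ∈ spectrum ℝ (A * B), μ ≤ 1 := by
  set R := CFC.sqrt A
  have hR : R.IsHermitian := (CFC.sqrt_nonneg A).posSemidef.isHermitian
  have hRR : R * R = A := CFC.sqrt_mul_sqrt_self A hA.posSemidef.nonneg
  have hRunit : IsUnit R := isUnit_of_mul_isUnit_left (hRR ▸ hA.isUnit)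
  set S := R * B * R
  have hS : S.IsHermitian := by
    simp only [S, IsHermitian, conjTranspose_mul, hR.eq, hB.eq, Matrix.mul_assoc]
  have hdet : IsUnit R.det := (isUnit_iff_isUnit_det R).mp hRunit
  have hconj : R * (A⁻¹ - B) * R = 1 - S := by
    rw [← hRR, Matrix.mul_inv_rev, Matrix.mul_sub, Matrix.sub_mul]
    simp only [S, ← Matrix.mul_assoc, mul_nonsing_inv R hdet, Matrix.one_mul,
      nonsing_inv_mul R hdet]
  have hsimilar : A * B = hRunit.unit * S * (↑hRunit.unit⁻¹ : Matrix ι ι ℝ) := by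
    rw [IsUnit.unit_spec, Matrix.coe_units_inv, IsUnit.unit_spec]
    simp only [S, Matrix.mul_assoc, mul_nonsing_inv R hdet, Matrix.mul_one, ← hRR]
  calc (A⁻¹ - B).PosSemidef ↔ (star R * (A⁻¹ - B) * R).PosSemidef :=
        hRunit.posSemidef_star_left_conjugate_iff.symm
    _ ↔ S ≤ 1 := by rw [star_eq_conjTranspose, hR.eq, hconj, ← Matrix.le_iff]
    _ ↔ ∀ μ ∈ spectrum ℝ (A * B), μ ≤ 1 := by
      rw [hS.le_one_iff_spectrum_le_one, hsimilar, spectrum.units_conjugate]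

end Spectrum

/-- For symmetric positive definite `A`, `B` and the ellipsoids
`X_A = {x : Ax·x ≤ ℏ}`, `P_B = {p : Bp·p ≤ ℏ}`, the following are equivalent:
(1) `X_A^ℏ ⊆ P_B`; (2) `A⁻¹ - B` is positive semidefinite (`B ≤ A⁻¹` in Löwner order);
(3) every (real) eigenvalue of `AB` is at most `1`. -/
theorem statement5 (n : ℕ) (ℏ : ℝ) (hℏ : 0 < ℏ)
    (A B : Matrix (Fin n) (Fin n) ℝ) (hA : A.PosDef) (hB : B.PosDef) :
    ((polarDual ℏ {x : Fin n → ℝ | A.mulVec x ⬝ᵥ x ≤ ℏ}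
        ⊆ {p : Fin n → ℝ | B.mulVec p ⬝ᵥ p ≤ ℏ}) ↔ (A⁻¹ - B).PosSemidef) ∧
    ((A⁻¹ - B).PosSemidef ↔
      ∀ (μ : ℝ) (v : Fin n → ℝ), v ≠ 0 → (A * B).mulVec v = μ • v → μ ≤ 1) := by
  refine ⟨?_, ?_⟩
  · change polarDual ℏ (ellipsoid ℏ A) ⊆ ellipsoid ℏ B ↔ _
    rw [polarDual_ellipsoid hℏ hA]
    exact ellipsoid_subset_ellipsoid_iff hℏ hA.inv hB.isHermitian
  · rw [hA.posSemidef_inv_sub_iff_spectrum_mul_le_one hB.isHermitian]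
    simp only [mem_spectrum_iff_exists_mulVec_eq_smul, forall_exists_index, and_imp]
end
end

section
/- Let ħ > 0 and S ∈ Sp(2n,ℝ) with block form [[A, B],[C, D]]. Then the quantum blob QB(S) = S(B^{2n}(√ħ)) can be written as QB(S) = V_{−P} M_L (B^{2n}(√ħ)) where L = (AAᵀ + BBᵀ)^{−1/2} and P = (CAᵀ + DBᵀ)(AAᵀ + BBᵀ)⁻¹, and this representation is unique: if V_{−P} M_L = V_{−P'} M_{L'} for symmetric P, P' and invertible L, L', then P = P' and L = L'. -/
open Matrix

noncomputable section

/-- The standard symplectic matrix `J = [[0, I],[-I, 0]]` on `ℝⁿ × ℝⁿ`. -/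
def stdJ (n : ℕ) : Matrix (Fin n ⊕ Fin n) (Fin n ⊕ Fin n) ℝ :=
  Matrix.fromBlocks 0 1 (-1) 0

/-- `S ∈ Sp(2n, ℝ)` iff `Sᵀ J S = J`. -/
def IsSymplectic {n : ℕ} (S : Matrix (Fin n ⊕ Fin n) (Fin n ⊕ Fin n) ℝ) : Prop :=
  Sᵀ * stdJ n * S = stdJ n

/-- The closed ball of radius `r` centered at `0` in phase space `ℝⁿ × ℝⁿ`. -/
def ballPhase (n : ℕ) (r : ℝ) : Set ((Fin n ⊕ Fin n) → ℝ) :=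
  {z | ∑ i, z i ^ 2 ≤ r ^ 2}

/-- `M_L = [[L⁻¹, 0],[0, Lᵀ]]` for `L ∈ GL(n, ℝ)`. -/
def ML {n : ℕ} (L : Matrix (Fin n) (Fin n) ℝ) :
    Matrix (Fin n ⊕ Fin n) (Fin n ⊕ Fin n) ℝ :=
  Matrix.fromBlocks L⁻¹ 0 0 Lᵀ

/-- `V_{-P} = [[I, 0],[P, I]]` for symmetric `P`. -/
def VmP {n : ℕ} (P : Matrix (Fin n) (Fin n) ℝ) :
    Matrix (Fin n ⊕ Fin n) (Fin n ⊕ Fin n) ℝ :=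
  Matrix.fromBlocks 1 0 P 1

/-!
An image `S(B)` of the ball depends only on the Gram matrix `S Sᵀ`: two invertible matrices with
the same Gram matrix differ by an orthogonal factor on the right, which preserves `B`. For `S`
symplectic, `S Sᵀ = [[G, Xᵀ], [X, H]]` with `G = AAᵀ + BBᵀ`, `X = CAᵀ + DBᵀ` is again symplectic,
which forces `H = X G⁻¹ Xᵀ + G⁻¹`; this is exactly the Gram matrix of `V_{-P} M_L` for
`P = X G⁻¹` and `L² = G⁻¹`. Uniqueness: `V_{-P} M_L = [[L⁻¹, 0], [P L⁻¹, Lᵀ]]`, whose lower blocks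
determine `L` and then `P`.
-/

section BallImage

variable {ι : Type*} [Fintype ι] [DecidableEq ι]

lemma dotProduct_mulVec_self_of_mul_transpose_eq_one {U : Matrix ι ι ℝ} (hU : U * Uᵀ = 1)
    (z : ι → ℝ) : U *ᵥ z ⬝ᵥ U *ᵥ z = z ⬝ᵥ z := by
  rw [dotProduct_mulVec, ← mulVec_transpose, mulVec_mulVec, mul_eq_one_comm.mp hU,
    one_mulVec]

lemma image_mulVec_subset_of_mul_transpose_eq {S T : Matrix ι ι ℝ} (hT : IsUnit T.det)
    (h : S * Sᵀ = T * Tᵀ) (c : ℝ) :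
    S.mulVec '' {z | z ⬝ᵥ z ≤ c} ⊆ T.mulVec '' {z | z ⬝ᵥ z ≤ c} := by
  have hTT : IsUnit Tᵀ.det := by rwa [det_transpose]
  have hU : (T⁻¹ * S) * (T⁻¹ * S)ᵀ = 1 := by
    rw [transpose_mul, transpose_nonsing_inv, mul_assoc, ← mul_assoc S, h, ← mul_assoc,
      nonsing_inv_mul_cancel_left _ _ hT, mul_nonsing_inv _ hTT]
  rintro _ ⟨z, hz, rfl⟩
  refine ⟨(T⁻¹ * S) *ᵥ z, ?_, ?_⟩
  · change _ ≤ c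
    rwa [dotProduct_mulVec_self_of_mul_transpose_eq_one hU]
  · rw [mulVec_mulVec, ← mul_assoc, mul_nonsing_inv _ hT, one_mul]

lemma image_mulVec_eq_of_mul_transpose_eq {S T : Matrix ι ι ℝ} (hS : IsUnit S.det)
    (h : S * Sᵀ = T * Tᵀ) (c : ℝ) :
    S.mulVec '' {z | z ⬝ᵥ z ≤ c} = T.mulVec '' {z | z ⬝ᵥ z ≤ c} := by
  have hT : IsUnit T.det := by
    have hdet := congrArg det h
    simp only [det_mul, det_transpose] at hdet
    rw [isUnit_iff_ne_zero] at hS ⊢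
    intro h0
    simp [h0, hS] at hdet
  exact (image_mulVec_subset_of_mul_transpose_eq hT h c).antisymm
    (image_mulVec_subset_of_mul_transpose_eq hS h.symm c)

end BallImage

lemma ballPhase_eq (n : ℕ) (r : ℝ) : ballPhase n r = {z | z ⬝ᵥ z ≤ r ^ 2} := by
  simp only [ballPhase, dotProduct, sq]

section Symplectic

variable {n : ℕ}

lemma stdJ_mul_stdJ : stdJ n * stdJ n = -1 := by
  simp [stdJ, fromBlocks_multiply, ← fromBlocks_one, fromBlocks_neg]

lemma IsSymplectic.transpose_mul_eq_one {S : Matrix (Fin n ⊕ Fin n) (Fin n ⊕ Fin n) ℝ}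
    (hS : IsSymplectic S) : Sᵀ * (stdJ n * S * -stdJ n) = 1 := by
  rw [← mul_assoc, ← mul_assoc, hS, mul_neg, stdJ_mul_stdJ, neg_neg]

lemma IsSymplectic.isUnit_det {S : Matrix (Fin n ⊕ Fin n) (Fin n ⊕ Fin n) ℝ}
    (hS : IsSymplectic S) : IsUnit S.det := by
  simpa only [det_transpose] using isUnit_det_of_right_inverse hS.transpose_mul_eq_one

lemma IsSymplectic.mul_stdJ_mul_transpose {S : Matrix (Fin n ⊕ Fin n) (Fin n ⊕ Fin n) ℝ}
    (hS : IsSymplectic S) : S * stdJ n * Sᵀ = stdJ n := by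
  calc S * stdJ n * Sᵀ = stdJ n * ((stdJ n * S * -stdJ n) * Sᵀ) := by
        simp only [← mul_assoc, stdJ_mul_stdJ, mul_neg, neg_mul, neg_neg, one_mul]
    _ = stdJ n := by rw [mul_eq_one_comm.mp hS.transpose_mul_eq_one, mul_one]

lemma IsSymplectic.mul_transpose_self {S : Matrix (Fin n ⊕ Fin n) (Fin n ⊕ Fin n) ℝ}
    (hS : IsSymplectic S) : IsSymplectic (S * Sᵀ) := by
  calc (S * Sᵀ)ᵀ * stdJ n * (S * Sᵀ) = S * (Sᵀ * stdJ n * S) * Sᵀ := by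
        simp only [transpose_mul, transpose_transpose, mul_assoc]
    _ = stdJ n := by rw [hS, hS.mul_stdJ_mul_transpose]

lemma IsSymplectic.fromBlocks_symm_lower_right {G X H : Matrix (Fin n) (Fin n) ℝ}
    (hM : IsSymplectic (fromBlocks G Xᵀ X H)) (hG : Gᵀ = G) (hGu : IsUnit G.det) :
    H = X * G⁻¹ * Xᵀ + G⁻¹ := by
  obtain ⟨h11, h12, -, -⟩ := fromBlocks_inj.mp <| by
    simpa only [IsSymplectic, stdJ, fromBlocks_transpose, transpose_transpose,
      fromBlocks_multiply] using hM
  simp only [hG, mul_zero, mul_one, mul_neg, zero_add, add_zero, neg_mul] at h11 h12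
  have hGX : G * X = Xᵀ * G := (neg_add_eq_zero.mp h11).symm
  have hGH : G * H = Xᵀ * Xᵀ + 1 := by rw [← h12]; abel
  have hXG : X * G⁻¹ = G⁻¹ * Xᵀ := by
    rw [← nonsing_inv_mul_cancel_left G (X * G⁻¹) hGu, ← mul_assoc G, hGX,
      mul_nonsing_inv_cancel_right _ _ hGu]
  calc H = G⁻¹ * (G * H) := (nonsing_inv_mul_cancel_left _ _ hGu).symm
    _ = X * G⁻¹ * Xᵀ + G⁻¹ := by rw [hGH, mul_add, mul_one, ← mul_assoc, ← hXG]

end Symplectic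

section NormalForm

variable {n : ℕ}

lemma VmP_mul_ML (P L : Matrix (Fin n) (Fin n) ℝ) :
    VmP P * ML L = fromBlocks L⁻¹ 0 (P * L⁻¹) Lᵀ := by
  simp [VmP, ML, fromBlocks_multiply]

lemma VmP_mul_ML_mul_transpose (P L : Matrix (Fin n) (Fin n) ℝ) :
    VmP P * ML L * (VmP P * ML L)ᵀ =
      fromBlocks (L⁻¹ * L⁻¹ᵀ) (L⁻¹ * L⁻¹ᵀ * Pᵀ) (P * (L⁻¹ * L⁻¹ᵀ))
        (P * (L⁻¹ * L⁻¹ᵀ) * Pᵀ + Lᵀ * L) := by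
  simp [VmP_mul_ML, fromBlocks_transpose, fromBlocks_multiply, mul_assoc]

lemma VmP_mul_ML_mul_transpose_of_mul_self_eq_inv {G X L : Matrix (Fin n) (Fin n) ℝ}
    (hG : Gᵀ = G) (hGu : IsUnit G.det) (hL : Lᵀ = L) (hLL : L * L = G⁻¹) :
    VmP (X * G⁻¹) * ML L * (VmP (X * G⁻¹) * ML L)ᵀ =
      fromBlocks G Xᵀ X (X * G⁻¹ * Xᵀ + G⁻¹) := by
  have hK : L⁻¹ * L⁻¹ᵀ = G := by
    rw [transpose_nonsing_inv, hL, ← Matrix.mul_inv_rev, hLL, nonsing_inv_nonsing_inv _ hGu]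
  have hGinv : G⁻¹ᵀ = G⁻¹ := by rw [transpose_nonsing_inv, hG]
  rw [VmP_mul_ML_mul_transpose, hK, hL, hLL, transpose_mul, hGinv,
    nonsing_inv_mul_cancel_right _ _ hGu, mul_nonsing_inv_cancel_left _ _ hGu, mul_assoc]

lemma VmP_mul_ML_injective {P P' L L' : Matrix (Fin n) (Fin n) ℝ} (hL : IsUnit L)
    (h : VmP P * ML L = VmP P' * ML L') : P = P' ∧ L = L' := by
  obtain ⟨-, -, hP, hLT⟩ := fromBlocks_inj.mp <| by simpa only [VmP_mul_ML] using h
  obtain rfl : L = L' := transpose_injective hLT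
  exact ⟨(isUnit_nonsing_inv_iff.mpr hL).mul_left_injective hP, rfl⟩

end NormalForm

lemma fromBlocks_mul_transpose_self {l m o p α : Type*} [Fintype l] [Fintype m] [CommRing α]
    (A : Matrix o l α) (B : Matrix o m α) (C : Matrix p l α) (D : Matrix p m α) :
    fromBlocks A B C D * (fromBlocks A B C D)ᵀ =
      fromBlocks (A * Aᵀ + B * Bᵀ) (C * Aᵀ + D * Bᵀ)ᵀ (C * Aᵀ + D * Bᵀ) (C * Cᵀ + D * Dᵀ) := by
  simp [fromBlocks_transpose, fromBlocks_multiply, transpose_add, transpose_mul]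

theorem statement8_general (n : ℕ) (ℏ : ℝ) (A B C D : Matrix (Fin n) (Fin n) ℝ)
    (hS : IsSymplectic (Matrix.fromBlocks A B C D)) :
    (∀ L : Matrix (Fin n) (Fin n) ℝ, L.PosDef → L * L = (A * Aᵀ + B * Bᵀ)⁻¹ →
      (Matrix.fromBlocks A B C D).mulVec '' ballPhase n (Real.sqrt ℏ)
        = (VmP ((C * Aᵀ + D * Bᵀ) * (A * Aᵀ + B * Bᵀ)⁻¹) * ML L).mulVec ''
            ballPhase n (Real.sqrt ℏ)) ∧
    (∀ P P' L L' : Matrix (Fin n) (Fin n) ℝ, P.IsSymm → P'.IsSymm →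
      IsUnit L → IsUnit L' → VmP P * ML L = VmP P' * ML L' → P = P' ∧ L = L') := by
  refine ⟨fun L hLpd hL => ?_, fun P P' L L' _ _ hLu _ h => VmP_mul_ML_injective hLu h⟩
  have hG : (A * Aᵀ + B * Bᵀ)ᵀ = A * Aᵀ + B * Bᵀ := by simp [transpose_add, transpose_mul]
  have hGu : IsUnit (A * Aᵀ + B * Bᵀ).det := by
    rw [← isUnit_nonsing_inv_det_iff, ← hL, ← isUnit_iff_isUnit_det]
    exact hLpd.isUnit.mul hLpd.isUnit
  have hLT : Lᵀ = L := by
    rw [← conjTranspose_eq_transpose_of_trivial]; exact hLpd.isHermitian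
  have hSST := hS.mul_transpose_self
  rw [fromBlocks_mul_transpose_self] at hSST
  rw [ballPhase_eq]
  refine image_mulVec_eq_of_mul_transpose_eq hS.isUnit_det ?_ _
  rw [fromBlocks_mul_transpose_self, VmP_mul_ML_mul_transpose_of_mul_self_eq_inv hG hGu hLT hL,
    ← hSST.fromBlocks_symm_lower_right hG hGu]

/-- The quantum blob `QB(S) = S(B^{2n}(√ℏ))` of a symplectic matrix `S = [[A,B],[C,D]]`
equals `V_{-P} M_L (B^{2n}(√ℏ))` with `L = (AAᵀ + BBᵀ)^{-1/2}` and
`P = (CAᵀ + DBᵀ)(AAᵀ + BBᵀ)⁻¹`; moreover this representation is unique: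
`V_{-P} M_L = V_{-P'} M_{L'}` with `P, P'` symmetric and `L, L'` invertible forces
`P = P'` and `L = L'`. -/
theorem statement8 (n : ℕ) (ℏ : ℝ) (hℏ : 0 < ℏ) (A B C D : Matrix (Fin n) (Fin n) ℝ)
    (hS : IsSymplectic (Matrix.fromBlocks A B C D)) :
    (∀ L : Matrix (Fin n) (Fin n) ℝ, L.PosDef → L * L = (A * Aᵀ + B * Bᵀ)⁻¹ →
      (Matrix.fromBlocks A B C D).mulVec '' ballPhase n (Real.sqrt ℏ)
        = (VmP ((C * Aᵀ + D * Bᵀ) * (A * Aᵀ + B * Bᵀ)⁻¹) * ML L).mulVec ''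
            ballPhase n (Real.sqrt ℏ)) ∧
    (∀ P P' L L' : Matrix (Fin n) (Fin n) ℝ, P.IsSymm → P'.IsSymm →
      IsUnit L → IsUnit L' → VmP P * ML L = VmP P' * ML L' → P = P' ∧ L = L') :=
  statement8_general n ℏ A B C D hS
end
end

section
/- Let M be a real 2n×2n matrix which is symmetric, positive definite, and symplectic (MᵀJM = J), with n×n block form M = [[M_XX, M_XP],[M_PX, M_PP]]. Then the Schur complements satisfy M_XX − M_XP M_PP⁻¹ M_PX = M_PP⁻¹ and M_PP − M_PX M_XX⁻¹ M_XP = M_XX⁻¹. -/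
open Matrix

noncomputable section

/-! A symplectic `M` has inverse `-J Mᵀ J`, whose diagonal blocks are `M_PPᵀ` and `M_XXᵀ`.
By the block-inverse formula, the diagonal blocks of `M⁻¹` are the inverses of the two Schur
complements. Positive definiteness makes `M` and its diagonal blocks invertible and symmetric. -/

namespace Matrix

variable {m l α : Type*} [Fintype m] [Fintype l] [DecidableEq m] [DecidableEq l] [CommRing α]

theorem sub_mul_inv_toBlocks₂₂_mul_eq_inv_toBlocks₁₁_inv (M : Matrix (m ⊕ l) (m ⊕ l) α)
    (hM : IsUnit M) (hD : IsUnit M.toBlocks₂₂) :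
    M.toBlocks₁₁ - M.toBlocks₁₂ * M.toBlocks₂₂⁻¹ * M.toBlocks₂₁ = (M⁻¹).toBlocks₁₁⁻¹ := by
  obtain ⟨A, B, C, D, rfl⟩ : ∃ A B C D, M = fromBlocks A B C D :=
    ⟨_, _, _, _, (fromBlocks_toBlocks M).symm⟩
  simp only [toBlocks_fromBlocks₁₁, toBlocks_fromBlocks₁₂, toBlocks_fromBlocks₂₁,
    toBlocks_fromBlocks₂₂] at hD ⊢
  let := hD.invertible
  let := hM.invertible
  let := invertibleOfFromBlocks₂₂Invertible A B C D
  rw [← invOf_eq_nonsing_inv (fromBlocks A B C D), invOf_fromBlocks₂₂_eq,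
    toBlocks_fromBlocks₁₁, invOf_eq_nonsing_inv (A - B * ⅟D * C), inv_inv_of_invertible,
    invOf_eq_nonsing_inv]

theorem sub_mul_inv_toBlocks₁₁_mul_eq_inv_toBlocks₂₂_inv (M : Matrix (m ⊕ l) (m ⊕ l) α)
    (hM : IsUnit M) (hA : IsUnit M.toBlocks₁₁) :
    M.toBlocks₂₂ - M.toBlocks₂₁ * M.toBlocks₁₁⁻¹ * M.toBlocks₁₂ = (M⁻¹).toBlocks₂₂⁻¹ := by
  obtain ⟨A, B, C, D, rfl⟩ : ∃ A B C D, M = fromBlocks A B C D :=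
    ⟨_, _, _, _, (fromBlocks_toBlocks M).symm⟩
  simp only [toBlocks_fromBlocks₁₁, toBlocks_fromBlocks₁₂, toBlocks_fromBlocks₂₁,
    toBlocks_fromBlocks₂₂] at hA ⊢
  let := hA.invertible
  let := hM.invertible
  let := invertibleOfFromBlocks₁₁Invertible A B C D
  rw [← invOf_eq_nonsing_inv (fromBlocks A B C D), invOf_fromBlocks₁₁_eq,
    toBlocks_fromBlocks₂₂, invOf_eq_nonsing_inv (D - C * ⅟A * B), inv_inv_of_invertible,
    invOf_eq_nonsing_inv]

theorem SymplecticGroup.inv_eq_fromBlocks {M : Matrix (l ⊕ l) (l ⊕ l) α}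
    (hM : M ∈ symplecticGroup l α) :
    M⁻¹ = fromBlocks M.toBlocks₂₂ᵀ (-M.toBlocks₁₂ᵀ) (-M.toBlocks₂₁ᵀ) M.toBlocks₁₁ᵀ := by
  rw [SymplecticGroup.inv_eq_symplectic_inv M hM]
  conv_lhs => rw [← fromBlocks_toBlocks M]
  simp [J, fromBlocks_transpose, fromBlocks_multiply, fromBlocks_neg]

end Matrix

theorem stdJ_eq_neg_J (n : ℕ) : stdJ n = -J (Fin n) ℝ := by
  simp [stdJ, J, fromBlocks_neg]

theorem isSymplectic_iff_mem_symplecticGroup {n : ℕ}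
    (M : Matrix (Fin n ⊕ Fin n) (Fin n ⊕ Fin n) ℝ) :
    IsSymplectic M ↔ M ∈ symplecticGroup (Fin n) ℝ := by
  rw [IsSymplectic, SymplecticGroup.mem_iff', stdJ_eq_neg_J, Matrix.mul_neg, Matrix.neg_mul,
    neg_inj]

/-- For a symmetric, positive definite, symplectic matrix `M` in block form
`[[M_XX, M_XP],[M_PX, M_PP]]`, the Schur complements satisfy
`M_XX - M_XP M_PP⁻¹ M_PX = M_PP⁻¹` and `M_PP - M_PX M_XX⁻¹ M_XP = M_XX⁻¹`. -/
theorem statement13 (n : ℕ)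
    (M : Matrix (Fin n ⊕ Fin n) (Fin n ⊕ Fin n) ℝ) (hM : M.PosDef)
    (hMsymp : IsSymplectic M) :
    M.toBlocks₁₁ - M.toBlocks₁₂ * M.toBlocks₂₂⁻¹ * M.toBlocks₂₁ = M.toBlocks₂₂⁻¹ ∧
      M.toBlocks₂₂ - M.toBlocks₂₁ * M.toBlocks₁₁⁻¹ * M.toBlocks₁₂ = M.toBlocks₁₁⁻¹ := by
  have hinv := SymplecticGroup.inv_eq_fromBlocks
    ((isSymplectic_iff_mem_symplecticGroup M).1 hMsymp)
  have hA : M.toBlocks₁₁.PosDef := hM.submatrix Sum.inl_injective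
  have hD : M.toBlocks₂₂.PosDef := hM.submatrix Sum.inr_injective
  constructor
  · rw [sub_mul_inv_toBlocks₂₂_mul_eq_inv_toBlocks₁₁_inv M hM.isUnit hD.isUnit, hinv,
      toBlocks_fromBlocks₁₁, ← conjTranspose_eq_transpose_of_trivial, hD.1]
  · rw [sub_mul_inv_toBlocks₁₁_mul_eq_inv_toBlocks₂₂_inv M hM.isUnit hA.isUnit, hinv,
      toBlocks_fromBlocks₂₂, ← conjTranspose_eq_transpose_of_trivial, hA.1]
end
end
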